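/- Let F be a measurable space, let E be a Polish space, let (ν^f)_{f ∈ F} be a family of probability measures on E such that f ↦ ν^f is a Markov kernel, and let ν̄ be a probability measure on E. Suppose sup_{f ∈ F} d_TV(ν^f, ν̄) ≤ ε, where d_TV(μ,ν) := sup_{A measurable} |μ(A) − ν(A)|. Then there exists a Markov kernel f ↦ ℙ^f from F to probability measures on E × E such that for every f ∈ F the first marginal of ℙ^f is ν^f, the second marginal of ℙ^f is ν̄, and ℙ^f( {(x,y) ∈ E × E : x ≠ y} ) ≤ ε. -/

import Mathlib

/-!
Take densities `d, d̄` of `ν^f` and `ν̄` with respect to `ν^f + ν̄`, chosen jointly measurable in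
`(f, x)`. Then `ν^f = m^f + R₁^f` and `ν̄ = m^f + R₂^f`, where `m^f` has density `min d d̄` and the
remainders `R₁^f`, `R₂^f` (densities `d - d̄` and `d̄ - d`) are mutually singular, of equal mass
`δ(f)`. On a set carrying `R₁^f` and null for `R₂^f`, the difference `ν^f - ν̄` equals `δ(f)`, so
`δ(f) ≤ ε`. Putting `m^f` on the diagonal and `δ(f)⁻¹ R₁^f ⊗ R₂^f` off it gives a coupling which
leaves the diagonal with probability at most `δ(f)`, and every ingredient is a kernel in `f`.
-/

open MeasureTheory ProbabilityTheory Set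
open scoped ENNReal NNReal

namespace MeasureTheory.Measure

variable {E : Type*} [MeasurableSpace E]

/-- When `R₁ ⟂ₘ R₂` and `R₁ univ = R₂ univ`, this is a maximal coupling of `m + R₁` and
`m + R₂`. -/
noncomputable def overlapCoupling (m R₁ R₂ : Measure E) : Measure (E × E) :=
  m.map Function.diag + (R₁ univ)⁻¹ • R₁.prod R₂

lemma inv_mul_measure_univ_smul_self (μ : Measure E) (h : μ univ ≠ ∞) :
    ((μ univ)⁻¹ * μ univ) • μ = μ := by
  rcases eq_zero_or_neZero μ with rfl | _
  · simp
  · rw [ENNReal.inv_mul_cancel (measure_univ_ne_zero.2 (NeZero.ne μ)) h, one_smul]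

variable {m R₁ R₂ : Measure E}

lemma map_fst_overlapCoupling [SFinite R₂] (hR : R₁ univ = R₂ univ) (hfin : R₁ univ ≠ ∞) :
    (overlapCoupling m R₁ R₂).map Prod.fst = m + R₁ := by
  rw [overlapCoupling, Measure.map_add _ _ measurable_fst, map_map measurable_fst measurable_diag,
    Measure.map_smul, map_fst_prod, smul_smul, ← hR, inv_mul_measure_univ_smul_self R₁ hfin]
  exact congrArg (· + R₁) map_id

lemma map_snd_overlapCoupling [SFinite R₂] (hR : R₁ univ = R₂ univ) (hfin : R₁ univ ≠ ∞) :
    (overlapCoupling m R₁ R₂).map Prod.snd = m + R₂ := by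
  rw [overlapCoupling, Measure.map_add _ _ measurable_snd, map_map measurable_snd measurable_diag,
    Measure.map_smul, map_snd_prod, smul_smul, hR, inv_mul_measure_univ_smul_self R₂ (hR ▸ hfin)]
  exact congrArg (· + R₂) map_id

lemma overlapCoupling_compl_diagonal_le [MeasurableEq E] [SFinite R₂] :
    overlapCoupling m R₁ R₂ (diagonal E)ᶜ ≤ R₂ univ := by
  have h_diag : m.map Function.diag (diagonal E)ᶜ = 0 := by
    rw [map_apply measurable_diag measurableSet_diagonal.compl, preimage_compl]
    simp [preimage, diagonal]
  calc overlapCoupling m R₁ R₂ (diagonal E)ᶜ ≤ (R₁ univ)⁻¹ * R₁.prod R₂ univ := by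
        rw [overlapCoupling, add_apply, h_diag, zero_add, smul_apply, smul_eq_mul]
        gcongr
        exact subset_univ _
    _ = (R₁ univ)⁻¹ * R₁ univ * R₂ univ := by rw [← univ_prod_univ, prod_prod, mul_assoc]
    _ ≤ R₂ univ := mul_le_of_le_one_left' (ENNReal.inv_mul_le_one _)

lemma withDensity_tsub_mutuallySingular (ξ : Measure E) {f g : E → ℝ≥0} (hf : Measurable f)
    (hg : Measurable g) :
    ξ.withDensity (fun x => ↑(f x - g x)) ⟂ₘ ξ.withDensity (fun x => ↑(g x - f x)) := by
  have hs : MeasurableSet {x | f x ≤ g x} := measurableSet_le hf hg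
  refine ⟨{x | f x ≤ g x}, hs, ?_, ?_⟩
  · rw [withDensity_apply _ hs]
    exact setLIntegral_eq_zero hs fun x hx => by simp [tsub_eq_zero_of_le hx.out]
  · rw [withDensity_apply _ hs.compl]
    exact setLIntegral_eq_zero hs.compl fun x (hx : ¬ f x ≤ g x) => by
      simp [tsub_eq_zero_of_le (not_le.1 hx).le]

lemma measure_univ_eq_of_add_eq {μ ν : Measure E} [IsFiniteMeasure μ] (h₁ : m + R₁ = μ)
    (h₂ : m + R₂ = ν) (hμν : μ univ = ν univ) : R₁ univ = R₂ univ := by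
  have hm : m univ ≠ ∞ := ne_top_of_le_ne_top (measure_ne_top μ univ) (h₁ ▸ le_add_right le_rfl)
  rw [← ENNReal.add_right_inj hm, ← add_apply, ← add_apply, h₁, h₂, hμν]

lemma measure_univ_le_of_add_eq_of_mutuallySingular {μ ν : Measure E} [IsFiniteMeasure μ]
    (h₁ : m + R₁ = μ) (h₂ : m + R₂ = ν) (hR : R₁ ⟂ₘ R₂) {ε : ℝ}
    (hTV : ∀ A : Set E, MeasurableSet A → |(μ A).toReal - (ν A).toReal| ≤ ε) :
    R₁ univ ≤ ENNReal.ofReal ε := by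
  obtain ⟨s, hs, hR₁s, hR₂s⟩ := hR
  have hμ : μ sᶜ = m sᶜ + R₁ univ := by
    rw [← h₁, add_apply, ← measure_add_measure_compl hs, hR₁s, zero_add]
  have hν : ν sᶜ = m sᶜ := by rw [← h₂, add_apply, hR₂s, add_zero]
  obtain ⟨hm_fin, hR₁_fin⟩ := ENNReal.add_ne_top.1 (hμ ▸ measure_ne_top μ sᶜ)
  have h_diff : (R₁ univ).toReal = (μ sᶜ).toReal - (ν sᶜ).toReal := by
    rw [hμ, hν, ENNReal.toReal_add hm_fin hR₁_fin]
    ring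
  rw [← ENNReal.ofReal_toReal hR₁_fin]
  exact ENNReal.ofReal_le_ofReal (h_diff ▸ (le_abs_self _).trans (hTV sᶜ hs.compl))

end MeasureTheory.Measure

namespace ProbabilityTheory.Kernel

variable {F E : Type*} [MeasurableSpace F] [MeasurableSpace E]

noncomputable def overlapCoupling (m R₁ R₂ : Kernel F E) [IsSFiniteKernel R₁]
    [IsSFiniteKernel R₂] : Kernel F (E × E) :=
  map m Function.diag + withDensity (R₁ ×ₖ R₂) (fun a _ => (R₁ a univ)⁻¹)

lemma overlapCoupling_apply (m R₁ R₂ : Kernel F E) [IsSFiniteKernel R₁] [IsSFiniteKernel R₂]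
    (a : F) : overlapCoupling m R₁ R₂ a = (m a).overlapCoupling (R₁ a) (R₂ a) := by
  have hc : Measurable (Function.uncurry fun a (_ : E × E) => (R₁ a univ)⁻¹) :=
    ((R₁.measurable_coe MeasurableSet.univ).comp measurable_fst).inv
  rw [overlapCoupling, add_apply, map_apply _ measurable_diag, Kernel.withDensity_apply _ hc,
    prod_apply, withDensity_const]
  rfl

section Decomposition

variable [MeasurableSpace.CountableOrCountablyGenerated F E] (κ η : Kernel F E)

/-- `rnDerivAux` rather than `Measure.rnDeriv` at each `a`: it is jointly measurable in `(a, x)`,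
which makes the parts below kernels. -/
noncomputable def densityWrtAdd (a : F) (x : E) : ℝ≥0 := (rnDerivAux κ (κ + η) a x).toNNReal

lemma measurable_densityWrtAdd : Measurable (Function.uncurry (densityWrtAdd κ η)) :=
  (measurable_rnDerivAux κ (κ + η)).real_toNNReal

variable [IsFiniteKernel κ] [IsFiniteKernel η]

lemma withDensity_densityWrtAdd : withDensity (κ + η) (fun a x => densityWrtAdd κ η a x) = κ :=
  withDensity_rnDerivAux κ η

noncomputable def commonPart : Kernel F E :=
  withDensity (κ + η) fun a x => (min (densityWrtAdd κ η a x) (densityWrtAdd η κ a x) : ℝ≥0)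

noncomputable def excessPart : Kernel F E :=
  withDensity (κ + η) fun a x => (densityWrtAdd κ η a x - densityWrtAdd η κ a x : ℝ≥0)

instance : IsSFiniteKernel (excessPart κ η) := by unfold excessPart; infer_instance

lemma commonPart_comm : commonPart κ η = commonPart η κ := by
  simp only [commonPart, add_comm κ η, min_comm]

lemma commonPart_add_excessPart : commonPart κ η + excessPart κ η = κ := by
  have hκ := measurable_densityWrtAdd κ η
  have hη := measurable_densityWrtAdd η κ
  rw [commonPart, excessPart, ← withDensity_add_right (hκ.min hη).coe_nnreal_ennreal
    (hκ.sub hη).coe_nnreal_ennreal]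
  conv_rhs => rw [← withDensity_densityWrtAdd κ η]
  congr with a x
  simp only [Pi.add_apply, ENNReal.coe_min, ENNReal.coe_sub]
  rw [add_comm, tsub_add_min]

lemma excessPart_mutuallySingular (a : F) : excessPart κ η a ⟂ₘ excessPart η κ a := by
  have hκ := measurable_densityWrtAdd κ η
  have hη := measurable_densityWrtAdd η κ
  rw [excessPart, excessPart, Kernel.withDensity_apply _ (hκ.sub hη).coe_nnreal_ennreal,
    Kernel.withDensity_apply _ (hη.sub hκ).coe_nnreal_ennreal, add_comm η κ]
  exact Measure.withDensity_tsub_mutuallySingular _ hκ.of_uncurry_left hη.of_uncurry_left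

end Decomposition

end ProbabilityTheory.Kernel

/-- Measurable coupling lemma: if a Markov kernel `ν` is uniformly within total variation
distance `ε` of a fixed probability measure `ν̄` on a Polish space, then there is a Markov
kernel of couplings `ℙ^f` of `ν^f` and `ν̄` such that `ℙ^f(X ≠ Y) ≤ ε` for every `f`. -/
theorem coupling_measurability
    {F : Type*} [MeasurableSpace F]
    {E : Type*} [MeasurableSpace E] [TopologicalSpace E] [PolishSpace E] [BorelSpace E]
    (ν : Kernel F E) (hν : IsMarkovKernel ν)
    (νbar : Measure E) (hνbar : IsProbabilityMeasure νbar)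
    (ε : ℝ)
    (hTV : ∀ f : F, ∀ A : Set E, MeasurableSet A →
      |(ν f A).toReal - (νbar A).toReal| ≤ ε) :
    ∃ κ : Kernel F (E × E), IsMarkovKernel κ ∧
      ∀ f : F,
        Measure.map Prod.fst (κ f) = ν f ∧
        Measure.map Prod.snd (κ f) = νbar ∧
        κ f {p : E × E | p.1 ≠ p.2} ≤ ENNReal.ofReal ε := by
  set η := Kernel.const F νbar
  have h₁ (f : F) : Kernel.commonPart ν η f + Kernel.excessPart ν η f = ν f := by
    rw [← add_apply, Kernel.commonPart_add_excessPart]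
  have h₂ (f : F) : Kernel.commonPart ν η f + Kernel.excessPart η ν f = νbar := by
    rw [Kernel.commonPart_comm, ← add_apply, Kernel.commonPart_add_excessPart,
      Kernel.const_apply]
  have h_mass (f : F) : Kernel.excessPart ν η f univ = Kernel.excessPart η ν f univ :=
    Measure.measure_univ_eq_of_add_eq (h₁ f) (h₂ f) (by simp)
  have h_fin (f : F) : Kernel.excessPart ν η f univ ≠ ∞ :=
    ne_top_of_le_ne_top (measure_ne_top (ν f) univ)
      (by rw [← h₁ f, Measure.add_apply]; exact le_add_self)
  set κ := Kernel.overlapCoupling (Kernel.commonPart ν η) (Kernel.excessPart ν η)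
    (Kernel.excessPart η ν)
  have h_fst (f : F) : (κ f).map Prod.fst = ν f := by
    rw [Kernel.overlapCoupling_apply, Measure.map_fst_overlapCoupling (h_mass f) (h_fin f), h₁]
  refine ⟨κ, ⟨fun f => (Measure.isProbabilityMeasure_map_iff measurable_fst.aemeasurable).1
    (h_fst f ▸ inferInstance)⟩, fun f => ⟨h_fst f, ?_, ?_⟩⟩
  · rw [Kernel.overlapCoupling_apply, Measure.map_snd_overlapCoupling (h_mass f) (h_fin f), h₂]
  · calc κ f (diagonal E)ᶜ ≤ Kernel.excessPart η ν f univ := by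
          rw [Kernel.overlapCoupling_apply]; exact Measure.overlapCoupling_compl_diagonal_le
      _ = Kernel.excessPart ν η f univ := (h_mass f).symm
      _ ≤ ENNReal.ofReal ε := Measure.measure_univ_le_of_add_eq_of_mutuallySingular (h₁ f) (h₂ f)
          (Kernel.excessPart_mutuallySingular ν η f) (hTV f)
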